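/- For all integers i, j, k with i − j ≡ 1 (mod 3) and k even, the following identity holds in F: Z(i−1,j+2,k) · Z(i+1,j,k) = Z(i,j+1,k−1) · Z(i,j+1,k+1) + Z(i,j+1,k)². -/
import Mathlib


noncomputable section

open MvPolynomial

/-- The field `F = ℚ(x₁,…,x₆)` of rational functions in six indeterminates over `ℚ`. -/
abbrev F : Type := FractionRing (MvPolynomial (Fin 6) ℚ)

/-- The indeterminate `x_{r+1}` as an element of `F` (so `x 0 = x₁, …, x 5 = x₆`). -/
def x (r : Fin 6) : F := algebraMap (MvPolynomial (Fin 6) ℚ) F (X r)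

/-- `A = (x₃x₅+x₄x₆)/(x₁x₂)` -/
def A : F := (x 2 * x 4 + x 3 * x 5) / (x 0 * x 1)

/-- `B = (x₁x₆+x₂x₅)/(x₃x₄)` -/
def B : F := (x 0 * x 5 + x 1 * x 4) / (x 2 * x 3)

/-- `C = (x₁x₃+x₂x₄)/(x₅x₆)` -/
def C : F := (x 0 * x 2 + x 1 * x 3) / (x 4 * x 5)

/-- `D = (x₁x₃x₆+x₂x₃x₅+x₂x₄x₆)/(x₁x₄x₅)` -/
def D : F := (x 0 * x 2 * x 5 + x 1 * x 2 * x 4 + x 1 * x 3 * x 5) / (x 0 * x 3 * x 4)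

/-- `E = (x₂x₄x₅+x₁x₃x₅+x₁x₄x₆)/(x₂x₃x₆)` -/
def E : F := (x 1 * x 3 * x 4 + x 0 * x 2 * x 4 + x 0 * x 3 * x 5) / (x 1 * x 2 * x 5)

/-- `a(i,j) = i² + ij + j² + 1 + i + 2j` -/
def a (i j : ℤ) : ℤ := i^2 + i*j + j^2 + 1 + i + 2*j

/-- `b(i,j) = i² + ij + j² + 1 + 2i + j` -/
def b (i j : ℤ) : ℤ := i^2 + i*j + j^2 + 1 + 2*i + j

/-- `c(i,j) = i² + ij + j² + 1` -/
def c (i j : ℤ) : ℤ := i^2 + i*j + j^2 + 1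

/-- The initial cluster variable `x_{r(i,j,k)}` determined by `2(i−j)+3k mod 6`:
`r = 1` if `≡ 5`, `r = 2` if `≡ 2`, `r = 3` if `≡ 4`, `r = 4` if `≡ 1`,
`r = 5` if `≡ 3`, and `r = 6` if `≡ 0 (mod 6)`. -/
def xr (i j k : ℤ) : F :=
  if (2*(i-j) + 3*k) % 6 = 5 then x 0
  else if (2*(i-j) + 3*k) % 6 = 2 then x 1
  else if (2*(i-j) + 3*k) % 6 = 4 then x 2
  else if (2*(i-j) + 3*k) % 6 = 1 then x 3
  else if (2*(i-j) + 3*k) % 6 = 3 then x 4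
  else x 5

/-- `Z(i,j,k) = x_{r(i,j,k)} · A^{⌊a(i,j)/3⌋} · B^{⌊b(i,j)/3⌋} · C^{⌊c(i,j)/3⌋} ·
D^{⌊(k−1)²/4⌋} · E^{⌊k²/4⌋}`.  (Note `Int` division by a positive integer is floor
division.) -/
def Z (i j k : ℤ) : F :=
  xr i j k * A ^ (a i j / 3) * B ^ (b i j / 3) * C ^ (c i j / 3)
    * D ^ ((k-1)^2 / 4) * E ^ (k^2 / 4)


section Aux

lemma x_ne_zero (r : Fin 6) : x r ≠ 0 :=
  (map_ne_zero_iff _ (IsFractionRing.injective (MvPolynomial (Fin 6) ℚ) F)).mpr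
    (MvPolynomial.X_ne_zero r)

lemma alg_ne_zero {p : MvPolynomial (Fin 6) ℚ} (h : p ≠ 0) :
    algebraMap (MvPolynomial (Fin 6) ℚ) F p ≠ 0 :=
  (map_ne_zero_iff _ (IsFractionRing.injective (MvPolynomial (Fin 6) ℚ) F)).mpr h

lemma A_ne_zero : A ≠ 0 := by
  have h1 : (x 2 * x 4 + x 3 * x 5 : F)
      = algebraMap (MvPolynomial (Fin 6) ℚ) F (X 2 * X 4 + X 3 * X 5) := by
    simp [x, map_add, map_mul]
  have h2 : (X 2 * X 4 + X 3 * X 5 : MvPolynomial (Fin 6) ℚ) ≠ 0 := by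
    intro h
    have := congrArg (MvPolynomial.eval fun _ => (1:ℚ)) h
    norm_num at this
  unfold A
  exact div_ne_zero (h1 ▸ alg_ne_zero h2) (mul_ne_zero (x_ne_zero 0) (x_ne_zero 1))

lemma B_ne_zero : B ≠ 0 := by
  have h1 : (x 0 * x 5 + x 1 * x 4 : F)
      = algebraMap (MvPolynomial (Fin 6) ℚ) F (X 0 * X 5 + X 1 * X 4) := by
    simp [x, map_add, map_mul]
  have h2 : (X 0 * X 5 + X 1 * X 4 : MvPolynomial (Fin 6) ℚ) ≠ 0 := by
    intro h
    have := congrArg (MvPolynomial.eval fun _ => (1:ℚ)) h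
    norm_num at this
  unfold B
  exact div_ne_zero (h1 ▸ alg_ne_zero h2) (mul_ne_zero (x_ne_zero 2) (x_ne_zero 3))

lemma C_ne_zero : C ≠ 0 := by
  have h1 : (x 0 * x 2 + x 1 * x 3 : F)
      = algebraMap (MvPolynomial (Fin 6) ℚ) F (X 0 * X 2 + X 1 * X 3) := by
    simp [x, map_add, map_mul]
  have h2 : (X 0 * X 2 + X 1 * X 3 : MvPolynomial (Fin 6) ℚ) ≠ 0 := by
    intro h
    have := congrArg (MvPolynomial.eval fun _ => (1:ℚ)) h
    norm_num at this
  unfold _root_.C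
  exact div_ne_zero (h1 ▸ alg_ne_zero h2) (mul_ne_zero (x_ne_zero 4) (x_ne_zero 5))

lemma D_ne_zero : D ≠ 0 := by
  have h1 : (x 0 * x 2 * x 5 + x 1 * x 2 * x 4 + x 1 * x 3 * x 5 : F)
      = algebraMap (MvPolynomial (Fin 6) ℚ) F
        (X 0 * X 2 * X 5 + X 1 * X 2 * X 4 + X 1 * X 3 * X 5) := by
    simp [x, map_add, map_mul]
  have h2 : (X 0 * X 2 * X 5 + X 1 * X 2 * X 4 + X 1 * X 3 * X 5 :
      MvPolynomial (Fin 6) ℚ) ≠ 0 := by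
    intro h
    have := congrArg (MvPolynomial.eval fun _ => (1:ℚ)) h
    norm_num at this
  unfold D
  exact div_ne_zero (h1 ▸ alg_ne_zero h2)
    (mul_ne_zero (mul_ne_zero (x_ne_zero 0) (x_ne_zero 3)) (x_ne_zero 4))

lemma E_ne_zero : E ≠ 0 := by
  have h1 : (x 1 * x 3 * x 4 + x 0 * x 2 * x 4 + x 0 * x 3 * x 5 : F)
      = algebraMap (MvPolynomial (Fin 6) ℚ) F
        (X 1 * X 3 * X 4 + X 0 * X 2 * X 4 + X 0 * X 3 * X 5) := by
    simp [x, map_add, map_mul]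
  have h2 : (X 1 * X 3 * X 4 + X 0 * X 2 * X 4 + X 0 * X 3 * X 5 :
      MvPolynomial (Fin 6) ℚ) ≠ 0 := by
    intro h
    have := congrArg (MvPolynomial.eval fun _ => (1:ℚ)) h
    norm_num at this
  unfold E
  exact div_ne_zero (h1 ▸ alg_ne_zero h2)
    (mul_ne_zero (mul_ne_zero (x_ne_zero 1) (x_ne_zero 2)) (x_ne_zero 5))

lemma key_identity : x 1 * x 2 * (A * B) = x 4 ^ 2 * D + x 5 ^ 2 := by
  have h0 := x_ne_zero 0
  have h1 := x_ne_zero 1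
  have h2 := x_ne_zero 2
  have h3 := x_ne_zero 3
  have h4 := x_ne_zero 4
  unfold A B D
  field_simp
  ring

lemma pow_even' {z : F} (hz : z ≠ 0) (w : ℤ) : z ^ (2*w) = (z ^ w) ^ 2 := by
  rw [two_mul, zpow_add₀ hz, sq]

lemma pow_odd' {z : F} (hz : z ≠ 0) (w : ℤ) : z ^ (2*w+1) = z * (z ^ w) ^ 2 := by
  rw [zpow_add₀ hz, zpow_one, pow_even' hz, mul_comm]

lemma main_lemma {a1 a2 a3 a4 a5 b1 b2 b3 b4 b5 c1 c2 c3 c4 c5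
    d1 d2 d3 d4 d5 e1 e2 e3 e4 e5 : ℤ}
    (sa : a1 + a2 = 2*a5 + 1) (sb : b1 + b2 = 2*b5 + 1) (sc : c1 + c2 = 2*c5)
    (sd : d1 + d2 = 2*d5) (se : e1 + e2 = 2*e5)
    (sa' : a3 + a4 = 2*a5) (sb' : b3 + b4 = 2*b5) (sc' : c3 + c4 = 2*c5)
    (sd' : d3 + d4 = 2*d5 + 1) (se' : e3 + e4 = 2*e5) :
    x 1 * A ^ a1 * B ^ b1 * C ^ c1 * D ^ d1 * E ^ e1 *
      (x 2 * A ^ a2 * B ^ b2 * C ^ c2 * D ^ d2 * E ^ e2)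
    = x 4 * A ^ a3 * B ^ b3 * C ^ c3 * D ^ d3 * E ^ e3 *
        (x 4 * A ^ a4 * B ^ b4 * C ^ c4 * D ^ d4 * E ^ e4)
      + (x 5 * A ^ a5 * B ^ b5 * C ^ c5 * D ^ d5 * E ^ e5) ^ 2 := by
  have hA := A_ne_zero
  have hB := B_ne_zero
  have hC := C_ne_zero
  have hD := D_ne_zero
  have hE := E_ne_zero
  have L : x 1 * A ^ a1 * B ^ b1 * C ^ c1 * D ^ d1 * E ^ e1 *
      (x 2 * A ^ a2 * B ^ b2 * C ^ c2 * D ^ d2 * E ^ e2)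
      = (x 1 * x 2 * (A * B)) *
        ((A^a5)^2 * (B^b5)^2 * (C^c5)^2 * (D^d5)^2 * (E^e5)^2) := by
    calc x 1 * A ^ a1 * B ^ b1 * C ^ c1 * D ^ d1 * E ^ e1 *
        (x 2 * A ^ a2 * B ^ b2 * C ^ c2 * D ^ d2 * E ^ e2)
        = (x 1 * x 2) * A^(a1+a2) * B^(b1+b2) * C^(c1+c2) * D^(d1+d2) * E^(e1+e2) := by
          rw [zpow_add₀ hA, zpow_add₀ hB, zpow_add₀ hC, zpow_add₀ hD, zpow_add₀ hE]; ring
      _ = _ := by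
          rw [sa, sb, sc, sd, se, pow_odd' hA, pow_odd' hB, pow_even' hC,
            pow_even' hD, pow_even' hE]; ring
  have R : x 4 * A ^ a3 * B ^ b3 * C ^ c3 * D ^ d3 * E ^ e3 *
      (x 4 * A ^ a4 * B ^ b4 * C ^ c4 * D ^ d4 * E ^ e4)
      = (x 4 ^ 2 * D) *
        ((A^a5)^2 * (B^b5)^2 * (C^c5)^2 * (D^d5)^2 * (E^e5)^2) := by
    calc x 4 * A ^ a3 * B ^ b3 * C ^ c3 * D ^ d3 * E ^ e3 *
        (x 4 * A ^ a4 * B ^ b4 * C ^ c4 * D ^ d4 * E ^ e4)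
        = (x 4 * x 4) * A^(a3+a4) * B^(b3+b4) * C^(c3+c4) * D^(d3+d4) * E^(e3+e4) := by
          rw [zpow_add₀ hA, zpow_add₀ hB, zpow_add₀ hC, zpow_add₀ hD, zpow_add₀ hE]; ring
      _ = _ := by
          rw [sa', sb', sc', sd', se', pow_even' hA, pow_even' hB, pow_even' hC,
            pow_odd' hD, pow_even' hE]; ring
  have R3 : (x 5 * A ^ a5 * B ^ b5 * C ^ c5 * D ^ d5 * E ^ e5) ^ 2
      = x 5 ^ 2 * ((A^a5)^2 * (B^b5)^2 * (C^c5)^2 * (D^d5)^2 * (E^e5)^2) := by ring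
  rw [L, R, R3, key_identity]
  ring

lemma ediv3 (q r : ℤ) {e : ℤ} (h : e = 3*q + r) (h0 : 0 ≤ r) (h1 : r < 3) :
    e / 3 = q := by subst h; omega

lemma ediv4 (q r : ℤ) {e : ℤ} (h : e = 4*q + r) (h0 : 0 ≤ r) (h1 : r < 4) :
    e / 4 = q := by subst h; omega

end Aux

/-- For `i − j ≡ 1 (mod 3)` and `k` even:
`Z(i−1,j+2,k)·Z(i+1,j,k) = Z(i,j+1,k−1)·Z(i,j+1,k+1) + Z(i,j+1,k)²`. -/
theorem stmt_16 (i j k : ℤ) (h3 : (i - j) % 3 = 1) (h2 : Even k) :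
    Z (i-1) (j+2) k * Z (i+1) j k
      = Z i (j+1) (k-1) * Z i (j+1) (k+1) + Z i (j+1) k ^ 2 := by
  obtain ⟨m, hm⟩ : ∃ m, i = j + 1 + 3*m := ⟨(i-j-1)/3, by omega⟩
  obtain ⟨n, hn⟩ := h2
  subst hm hn
  have hx1 : xr (j+1+3*m-1) (j+2) (n+n) = x 1 := by
    unfold xr; rw [if_neg (by omega), if_pos (by omega)]
  have hx2 : xr (j+1+3*m+1) j (n+n) = x 2 := by
    unfold xr; rw [if_neg (by omega), if_neg (by omega), if_pos (by omega)]
  have hx4a : xr (j+1+3*m) (j+1) (n+n-1) = x 4 := by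
    unfold xr
    rw [if_neg (by omega), if_neg (by omega), if_neg (by omega), if_neg (by omega),
      if_pos (by omega)]
  have hx4b : xr (j+1+3*m) (j+1) (n+n+1) = x 4 := by
    unfold xr
    rw [if_neg (by omega), if_neg (by omega), if_neg (by omega), if_neg (by omega),
      if_pos (by omega)]
  have hx5 : xr (j+1+3*m) (j+1) (n+n) = x 5 := by
    unfold xr
    rw [if_neg (by omega), if_neg (by omega), if_neg (by omega), if_neg (by omega),
      if_neg (by omega)]
  have da1 : a (j+1+3*m-1) (j+2) / 3 = 3+3*j+3*m+j^2+3*(j*m)+3*m^2 :=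
    ediv3 _ 0 (by unfold a; ring) (by norm_num) (by norm_num)
  have db1 : b (j+1+3*m-1) (j+2) / 3 = 2+3*j+4*m+j^2+3*(j*m)+3*m^2 :=
    ediv3 _ 1 (by unfold b; ring) (by norm_num) (by norm_num)
  have dc1 : c (j+1+3*m-1) (j+2) / 3 = 1+2*j+2*m+j^2+3*(j*m)+3*m^2 :=
    ediv3 _ 2 (by unfold c; ring) (by norm_num) (by norm_num)
  have da2 : a (j+1+3*m+1) j / 3 = 2+3*j+5*m+j^2+3*(j*m)+3*m^2 :=
    ediv3 _ 1 (by unfold a; ring) (by norm_num) (by norm_num)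
  have db2 : b (j+1+3*m+1) j / 3 = 3+3*j+6*m+j^2+3*(j*m)+3*m^2 :=
    ediv3 _ 0 (by unfold b; ring) (by norm_num) (by norm_num)
  have dc2 : c (j+1+3*m+1) j / 3 = 1+2*j+4*m+j^2+3*(j*m)+3*m^2 :=
    ediv3 _ 2 (by unfold c; ring) (by norm_num) (by norm_num)
  have da5 : a (j+1+3*m) (j+1) / 3 = 2+3*j+4*m+j^2+3*(j*m)+3*m^2 :=
    ediv3 _ 1 (by unfold a; ring) (by norm_num) (by norm_num)
  have db5 : b (j+1+3*m) (j+1) / 3 = 2+3*j+5*m+j^2+3*(j*m)+3*m^2 :=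
    ediv3 _ 1 (by unfold b; ring) (by norm_num) (by norm_num)
  have dc5 : c (j+1+3*m) (j+1) / 3 = 1+2*j+3*m+j^2+3*(j*m)+3*m^2 :=
    ediv3 _ 1 (by unfold c; ring) (by norm_num) (by norm_num)
  have dD : (n+n-1)^2 / 4 = n^2 - n := ediv4 _ 1 (by ring) (by norm_num) (by norm_num)
  have dE : (n+n)^2 / 4 = n^2 := ediv4 _ 0 (by ring) (by norm_num) (by norm_num)
  have dDm : (n+n-1-1)^2 / 4 = n^2 - 2*n + 1 :=
    ediv4 _ 0 (by ring) (by norm_num) (by norm_num)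
  have dDp : (n+n+1-1)^2 / 4 = n^2 := ediv4 _ 0 (by ring) (by norm_num) (by norm_num)
  have dEp : (n+n+1)^2 / 4 = n^2 + n := ediv4 _ 1 (by ring) (by norm_num) (by norm_num)
  simp only [Z, hx1, hx2, hx4a, hx4b, hx5]
  rw [da1, db1, dc1, da2, db2, dc2, da5, db5, dc5, dD, dE, dDm, dDp, dEp]
  exact main_lemma (by ring) (by ring) (by ring) (by ring) (by ring)
    (by ring) (by ring) (by ring) (by ring) (by ring)
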